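/- arXiv:1802.00877 — 2 statements merged into one kernel-verified Lean document; each statement's English description precedes it below -/
import Mathlib

section
/- If a Killing field 𝔎 = (A, B⃗, C⃗, D⃗) of the AdS space is an observer Killing field, i.e., satisfies A·D⃗ = -B⃗ × C⃗, A > max{|B⃗|, |C⃗|, |D⃗|}, and A² + |D⃗|² - |B⃗|² - |C⃗|² = κ², then A ≥ √(κ² + |C⃗|²). -/
/-- Euclidean norm of a vector in `ℝ³`. -/
noncomputable def enorm3 (v : Fin 3 → ℝ) : ℝ :=
  Real.sqrt (v 0 ^ 2 + v 1 ^ 2 + v 2 ^ 2)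

lemma enorm3_nonneg (v : Fin 3 → ℝ) : 0 ≤ enorm3 v := Real.sqrt_nonneg _

lemma enorm3_sq (v : Fin 3 → ℝ) : enorm3 v ^ 2 = v 0 ^ 2 + v 1 ^ 2 + v 2 ^ 2 := by
  rw [enorm3, Real.sq_sqrt]; positivity

/-- If a Killing field `𝔎 = (A, B⃗, C⃗, D⃗)` of the AdS space is an observer Killing field,
i.e. `A·D⃗ = -B⃗ × C⃗`, `A > max{|B⃗|, |C⃗|, |D⃗|}`, and `A² + |D⃗|² - |B⃗|² - |C⃗|² = κ²`,
then `A ≥ √(κ² + |C⃗|²)`. -/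
theorem stmt2 (κ A : ℝ) (B C D : Fin 3 → ℝ) (hκ : 0 < κ) (hA : 0 < A)
    (h1 : A • D = -(crossProduct B C))
    (h2 : A > max (max (enorm3 B) (enorm3 C)) (enorm3 D))
    (h3 : A ^ 2 + enorm3 D ^ 2 - enorm3 B ^ 2 - enorm3 C ^ 2 = κ ^ 2) :
    A ≥ Real.sqrt (κ ^ 2 + enorm3 C ^ 2) := by
  have hb := enorm3_sq B
  have hc := enorm3_sq C
  have hd := enorm3_sq D
  have hbA : enorm3 B < A := lt_of_le_of_lt (le_max_left _ _ |>.trans (le_max_left _ _)) h2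
  have hcA : enorm3 C < A := lt_of_le_of_lt (le_max_right _ _ |>.trans (le_max_left _ _)) h2
  have e0 : A * D 0 = -(B 1 * C 2 - B 2 * C 1) := by
    have := congrFun h1 0
    simpa [crossProduct] using this
  have e1 : A * D 1 = -(B 2 * C 0 - B 0 * C 2) := by
    have := congrFun h1 1
    simpa [crossProduct] using this
  have e2 : A * D 2 = -(B 0 * C 1 - B 1 * C 0) := by
    have := congrFun h1 2
    simpa [crossProduct] using this
  -- |B×C|² ≤ |B|²|C|², so A²·|D|² ≤ |B|²·|C|² ≤ |B|²·A², hence |D|² ≤ |B|².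
  have key : enorm3 D ^ 2 ≤ enorm3 B ^ 2 := by
    have q0 := congrArg (· ^ 2) e0
    have q1 := congrArg (· ^ 2) e1
    have q2 := congrArg (· ^ 2) e2
    have hAd : A ^ 2 * enorm3 D ^ 2 ≤ enorm3 B ^ 2 * enorm3 C ^ 2 := by
      rw [hb, hc, hd]
      have heq : A ^ 2 * (D 0 ^ 2 + D 1 ^ 2 + D 2 ^ 2) =
          (B 1 * C 2 - B 2 * C 1) ^ 2 + (B 2 * C 0 - B 0 * C 2) ^ 2 +
          (B 0 * C 1 - B 1 * C 0) ^ 2 := by linear_combination q0 + q1 + q2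
      have lag : (B 0 ^ 2 + B 1 ^ 2 + B 2 ^ 2) * (C 0 ^ 2 + C 1 ^ 2 + C 2 ^ 2) =
          (B 1 * C 2 - B 2 * C 1) ^ 2 + (B 2 * C 0 - B 0 * C 2) ^ 2 +
          (B 0 * C 1 - B 1 * C 0) ^ 2 + (B 0 * C 0 + B 1 * C 1 + B 2 * C 2) ^ 2 := by
        ring
      linarith [heq, lag, sq_nonneg (B 0 * C 0 + B 1 * C 1 + B 2 * C 2)]
    have hc2 : enorm3 C ^ 2 ≤ A ^ 2 := pow_le_pow_left₀ (enorm3_nonneg C) hcA.le 2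
    have h5 : A ^ 2 * enorm3 D ^ 2 ≤ A ^ 2 * enorm3 B ^ 2 := by
      calc A ^ 2 * enorm3 D ^ 2 ≤ enorm3 B ^ 2 * enorm3 C ^ 2 := hAd
        _ ≤ enorm3 B ^ 2 * A ^ 2 := mul_le_mul_of_nonneg_left hc2 (sq_nonneg _)
        _ = A ^ 2 * enorm3 B ^ 2 := mul_comm _ _
    exact le_of_mul_le_mul_left h5 (by positivity)
  have hle : κ ^ 2 + enorm3 C ^ 2 ≤ A ^ 2 := by linarith [key, h3]
  calc Real.sqrt (κ ^ 2 + enorm3 C ^ 2) ≤ Real.sqrt (A ^ 2) := Real.sqrt_le_sqrt hle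
    _ = A := Real.sqrt_sq hA.le
end

section
/- Let W be a Weyl-type tensor on a 4-dimensional Lorentzian vector space with orthonormal basis {e₀, e₁, e₂, e₃} (e₀ timelike), and define the vector U = (½Σ_{k,m,n}W_{0kmn}² + Σ_{m,n}W_{0m0n}², 2Σ_{m,n}W_{0m0n}W_{0m1n}, 2Σ_{m,n}W_{0m0n}W_{0m2n}, 2Σ_{m,n}W_{0m0n}W_{0m3n}) ∈ ℝ^{3,1}. Then U is future-directed non-spacelike; that is, its time component is nonnegative and (U⁰)² ≥ (U¹)² + (U²)² + (U³)². -/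
set_option maxHeartbeats 1000000


lemma cross_sq_le' (a1 a2 a3 b1 b2 b3 : ℝ) :
    (a2*b3-a3*b2)^2+(a3*b1-a1*b3)^2+(a1*b2-a2*b1)^2
      ≤ (a1^2+a2^2+a3^2)*(b1^2+b2^2+b3^2) := by
  nlinarith [sq_nonneg (a1*b1+a2*b2+a3*b3)]

lemma dot_le' (u1 u2 u3 v1 v2 v3 s t : ℝ) (hs : 0 ≤ s)
    (hu : u1^2+u2^2+u3^2 ≤ s) (hv : v1^2+v2^2+v3^2 ≤ t) :
    u1*v1+u2*v2+u3*v3 ≤ Real.sqrt s * Real.sqrt t := by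
  have hcs : (u1*v1+u2*v2+u3*v3)^2 ≤ s*t := by
    nlinarith [sq_nonneg (u1*v2-u2*v1), sq_nonneg (u1*v3-u3*v1), sq_nonneg (u2*v3-u3*v2),
      sq_nonneg u1, sq_nonneg u2, sq_nonneg u3, sq_nonneg v1, sq_nonneg v2, sq_nonneg v3]
  calc u1*v1+u2*v2+u3*v3 ≤ |u1*v1+u2*v2+u3*v3| := le_abs_self _
    _ = Real.sqrt ((u1*v1+u2*v2+u3*v3)^2) := (Real.sqrt_sq_eq_abs _).symm
    _ ≤ Real.sqrt (s*t) := Real.sqrt_le_sqrt hcs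
    _ = Real.sqrt s * Real.sqrt t := Real.sqrt_mul hs t

lemma sqrt_amgm' (x y : ℝ) (hx : 0 ≤ x) (hy : 0 ≤ y) :
    Real.sqrt (x*y) ≤ (x+y)/2 := by
  rw [show (x+y)/2 = Real.sqrt (((x+y)/2)^2) from (Real.sqrt_sq (by linarith)).symm]
  exact Real.sqrt_le_sqrt (by nlinarith [sq_nonneg (x-y)])

lemma sum3' (c11 c12 c13 c21 c22 c23 c31 c32 c33 s1 s2 s3 : ℝ)
    (hs1 : 0 ≤ s1) (hs2 : 0 ≤ s2) (hs3 : 0 ≤ s3)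
    (h1 : c11^2+c12^2+c13^2 ≤ s1) (h2 : c21^2+c22^2+c23^2 ≤ s2)
    (h3 : c31^2+c32^2+c33^2 ≤ s3) :
    (c11+c21+c31)^2+(c12+c22+c32)^2+(c13+c23+c33)^2
      ≤ (Real.sqrt s1 + Real.sqrt s2 + Real.sqrt s3)^2 := by
  have d11 := dot_le' c11 c12 c13 c11 c12 c13 s1 s1 hs1 h1 h1
  have d22 := dot_le' c21 c22 c23 c21 c22 c23 s2 s2 hs2 h2 h2
  have d33 := dot_le' c31 c32 c33 c31 c32 c33 s3 s3 hs3 h3 h3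
  have d12 := dot_le' c11 c12 c13 c21 c22 c23 s1 s2 hs1 h1 h2
  have d13 := dot_le' c11 c12 c13 c31 c32 c33 s1 s3 hs1 h1 h3
  have d23 := dot_le' c21 c22 c23 c31 c32 c33 s2 s3 hs2 h2 h3
  nlinarith [d11, d22, d33, d12, d13, d23]

lemma main18 (e11 e12 e13 e21 e22 e23 e31 e32 e33
    b11 b12 b13 b21 b22 b23 b31 b32 b33 : ℝ) :
    (2*((e12*b13-e13*b12)+(e22*b23-e23*b22)+(e32*b33-e33*b32)))^2
    + (2*((e13*b11-e11*b13)+(e23*b21-e21*b23)+(e33*b31-e31*b33)))^2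
    + (2*((e11*b12-e12*b11)+(e21*b22-e22*b21)+(e31*b32-e32*b31)))^2
    ≤ ((e11^2+e12^2+e13^2+e21^2+e22^2+e23^2+e31^2+e32^2+e33^2
      + b11^2+b12^2+b13^2+b21^2+b22^2+b23^2+b31^2+b32^2+b33^2))^2 := by
  have he1 : (0:ℝ) ≤ e11^2+e12^2+e13^2 := by positivity
  have he2 : (0:ℝ) ≤ e21^2+e22^2+e23^2 := by positivity
  have he3 : (0:ℝ) ≤ e31^2+e32^2+e33^2 := by positivity
  have hb1 : (0:ℝ) ≤ b11^2+b12^2+b13^2 := by positivity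
  have hb2 : (0:ℝ) ≤ b21^2+b22^2+b23^2 := by positivity
  have hb3 : (0:ℝ) ≤ b31^2+b32^2+b33^2 := by positivity
  have key1 := sum3' (e12*b13-e13*b12) (e13*b11-e11*b13) (e11*b12-e12*b11)
    (e22*b23-e23*b22) (e23*b21-e21*b23) (e21*b22-e22*b21)
    (e32*b33-e33*b32) (e33*b31-e31*b33) (e31*b32-e32*b31)
    ((e11^2+e12^2+e13^2)*(b11^2+b12^2+b13^2))
    ((e21^2+e22^2+e23^2)*(b21^2+b22^2+b23^2))
    ((e31^2+e32^2+e33^2)*(b31^2+b32^2+b33^2))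
    (mul_nonneg he1 hb1) (mul_nonneg he2 hb2) (mul_nonneg he3 hb3)
    (cross_sq_le' e11 e12 e13 b11 b12 b13)
    (cross_sq_le' e21 e22 e23 b21 b22 b23)
    (cross_sq_le' e31 e32 e33 b31 b32 b33)
  have a1 := sqrt_amgm' _ _ he1 hb1
  have a2 := sqrt_amgm' _ _ he2 hb2
  have a3 := sqrt_amgm' _ _ he3 hb3
  have rn1 := Real.sqrt_nonneg ((e11^2+e12^2+e13^2)*(b11^2+b12^2+b13^2))
  have rn2 := Real.sqrt_nonneg ((e21^2+e22^2+e23^2)*(b21^2+b22^2+b23^2))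
  have rn3 := Real.sqrt_nonneg ((e31^2+e32^2+e33^2)*(b31^2+b32^2+b33^2))
  have key2 : (Real.sqrt ((e11^2+e12^2+e13^2)*(b11^2+b12^2+b13^2))
      + Real.sqrt ((e21^2+e22^2+e23^2)*(b21^2+b22^2+b23^2))
      + Real.sqrt ((e31^2+e32^2+e33^2)*(b31^2+b32^2+b33^2)))^2
      ≤ ((e11^2+e12^2+e13^2+e21^2+e22^2+e23^2+e31^2+e32^2+e33^2
      + b11^2+b12^2+b13^2+b21^2+b22^2+b23^2+b31^2+b32^2+b33^2)/2)^2 := by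
    apply pow_le_pow_left₀ (by linarith)
    linarith
  linarith [key1, key2]

/-- The Minkowski signs `η_α` for the orthonormal frame `{e₀,e₁,e₂,e₃}` with `e₀` timelike. -/
def ηm (a : Fin 4) : ℝ := if a = 0 then -1 else 1

/-- For a Weyl-type tensor `W` in an orthonormal frame of a 4-dimensional Lorentzian vector
space, the vector `U = (½ΣW_{0kmn}² + ΣW_{0m0n}², 2ΣW_{0m0n}W_{0min})` is future-directed
non-spacelike: `U⁰ ≥ 0` and `(U⁰)² ≥ (U¹)² + (U²)² + (U³)²`. -/

theorem stmt13 (W : Fin 4 → Fin 4 → Fin 4 → Fin 4 → ℝ)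
    (hanti1 : ∀ a b c d, W a b c d = -W b a c d)
    (hanti2 : ∀ a b c d, W a b c d = -W a b d c)
    (hpair : ∀ a b c d, W a b c d = W c d a b)
    (hbianchi : ∀ a b c d, W a b c d + W a c d b + W a d b c = 0)
    (htrace : ∀ b d, (∑ a : Fin 4, ηm a * W a b a d) = 0)
    (U : Fin 4 → ℝ)
    (hU0 : U 0 = (1/2) * (∑ k : Fin 3, ∑ m : Fin 3, ∑ n : Fin 3,
        W 0 k.succ m.succ n.succ ^ 2)
      + ∑ m : Fin 3, ∑ n : Fin 3, W 0 m.succ 0 n.succ ^ 2)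
    (hUi : ∀ i : Fin 3, U i.succ = 2 * ∑ m : Fin 3, ∑ n : Fin 3,
      W 0 m.succ 0 n.succ * W 0 m.succ i.succ n.succ) :
    0 ≤ U 0 ∧ (U 1) ^ 2 + (U 2) ^ 2 + (U 3) ^ 2 ≤ (U 0) ^ 2 := by
  have hdiag : ∀ a c : Fin 4, W 0 a c c = 0 := fun a c => by
    have := hanti2 0 a c c; linarith
  have hswap : ∀ a c d : Fin 4, W 0 a d c = -W 0 a c d := fun a c d => hanti2 0 a d c
  have h0 := hU0
  have h1 := hUi 0
  have h2 := hUi 1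
  have h3 := hUi 2
  simp only [Fin.sum_univ_three, show ((0:Fin 3).succ : Fin 4) = 1 from rfl,
    show ((1:Fin 3).succ : Fin 4) = 2 from rfl,
    show ((2:Fin 3).succ : Fin 4) = 3 from by decide] at h0 h1 h2 h3
  simp only [hdiag, hswap 1 1 2, hswap 1 1 3, hswap 1 2 3, hswap 2 1 2, hswap 2 1 3,
    hswap 2 2 3, hswap 3 1 2, hswap 3 1 3, hswap 3 2 3] at h0 h1 h2 h3
  constructor
  · rw [hU0]; positivity
  · rw [h1, h2, h3, h0]
    have key := main18 (W 0 1 0 1) (W 0 1 0 2) (W 0 1 0 3)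
      (W 0 2 0 1) (W 0 2 0 2) (W 0 2 0 3)
      (W 0 3 0 1) (W 0 3 0 2) (W 0 3 0 3)
      (W 0 1 2 3) (-W 0 1 1 3) (W 0 1 1 2)
      (W 0 2 2 3) (-W 0 2 1 3) (W 0 2 1 2)
      (W 0 3 2 3) (-W 0 3 1 3) (W 0 3 1 2)
    linarith [key]
end
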